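/- Let f : 𝕆 → 𝕆 be left para-linear and r ∈ 𝕆. Define (f ⊙ r)(x) := f(x)·r − (f(rx) − r f(x)). Then f ⊙ r is again left para-linear. -/

import Mathlib

noncomputable section

open Quaternion

/-- The octonions, as the Cayley–Dickson double of the quaternions. -/
def Octo : Type := ℍ × ℍ

namespace Octo

instance : AddCommGroup Octo := inferInstanceAs (AddCommGroup (ℍ × ℍ))
instance : Module ℝ Octo := inferInstanceAs (Module ℝ (ℍ × ℍ))

/-- Cayley–Dickson multiplication: (a,b)(c,d) = (ac − d̄b, da + bc̄). -/
instance : Mul Octo :=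
  ⟨fun x y => ((x.1 * y.1 - star y.2 * x.2, y.2 * x.1 + x.2 * star y.1) : ℍ × ℍ)⟩

/-- Octonionic conjugation. -/
def conj (x : Octo) : Octo := ((star x.1, -x.2) : ℍ × ℍ)

/-- Real part. -/
def re (x : Octo) : ℝ := x.1.re

/-- Squared norm. -/
def normSq (x : Octo) : ℝ := re (x * conj x)

/-- The standard basis e₀ = 1, e₁, …, e₇. -/
def e : Fin 8 → Octo :=
  ![((1, 0) : ℍ × ℍ), ((⟨0,1,0,0⟩, 0) : ℍ × ℍ), ((⟨0,0,1,0⟩, 0) : ℍ × ℍ),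
    ((⟨0,0,0,1⟩, 0) : ℍ × ℍ), ((0, 1) : ℍ × ℍ), ((0, ⟨0,1,0,0⟩) : ℍ × ℍ),
    ((0, ⟨0,0,1,0⟩) : ℍ × ℍ), ((0, ⟨0,0,0,1⟩) : ℍ × ℍ)]

/-- Inverse: p⁻¹ = conj p / |p|². -/
def inv (x : Octo) : Octo := (normSq x)⁻¹ • conj x

/-- The associator [a,b,c] = (ab)c − a(bc). -/
def assoc (a b c : Octo) : Octo := a * b * c - a * (b * c)

/-- Left para-linear map: ℝ-linear with Re(f(px) − p f(x)) = 0. -/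
def IsParaLinear (f : Octo → Octo) : Prop :=
  IsLinearMap ℝ f ∧ ∀ p x : Octo, re (f (p * x) - p * f x) = 0

end Octo

/-!
Write `g = f ⊙ r`. Using `Re (ab) = Re (ba)`, `Re ((ab)c) = Re (a(bc))` and
`Re f(px) = Re (p f(x))`, every term of `Re g(px)` and of `Re (p g(x))` becomes the real part of
`f` at a product of `r`, `p`, `x`: `Re g(px) = Re f(r(px))` and
`Re (p g(x)) = Re f((rp)x) − Re f(p(rx)) + Re f((pr)x)`. The difference is
`Re f([r,p,x] + [p,r,x])` up to sign, and `[r,p,x] + [p,r,x] = 0` is the polarized left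
alternative law.
-/

namespace Octo

theorem ext {x y : Octo} (h₁ : x.1 = y.1) (h₂ : x.2 = y.2) : x = y := Prod.ext h₁ h₂

@[simp] theorem fst_add (x y : Octo) : (x + y).1 = x.1 + y.1 := rfl
@[simp] theorem snd_add (x y : Octo) : (x + y).2 = x.2 + y.2 := rfl
@[simp] theorem fst_sub (x y : Octo) : (x - y).1 = x.1 - y.1 := rfl
@[simp] theorem snd_sub (x y : Octo) : (x - y).2 = x.2 - y.2 := rfl
@[simp] theorem fst_smul (s : ℝ) (x : Octo) : (s • x).1 = s • x.1 := rfl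
@[simp] theorem snd_smul (s : ℝ) (x : Octo) : (s • x).2 = s • x.2 := rfl
@[simp] theorem fst_mul (x y : Octo) : (x * y).1 = x.1 * y.1 - star y.2 * x.2 := rfl
@[simp] theorem snd_mul (x y : Octo) : (x * y).2 = y.2 * x.1 + x.2 * star y.1 := rfl

theorem add_mul (a b c : Octo) : (a + b) * c = a * c + b * c :=
  ext (by simp only [fst_add, snd_add, fst_mul]; noncomm_ring)
    (by simp only [fst_add, snd_add, snd_mul]; noncomm_ring)

theorem mul_add (a b c : Octo) : a * (b + c) = a * b + a * c :=
  ext (by simp only [fst_add, snd_add, fst_mul, star_add]; noncomm_ring)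
    (by simp only [fst_add, snd_add, snd_mul, star_add]; noncomm_ring)

theorem mul_sub (a b c : Octo) : a * (b - c) = a * b - a * c :=
  ext (by simp only [fst_sub, snd_sub, fst_mul, star_sub]; noncomm_ring)
    (by simp only [fst_sub, snd_sub, snd_mul, star_sub]; noncomm_ring)

theorem smul_mul (s : ℝ) (a b : Octo) : (s • a) * b = s • (a * b) :=
  ext (by simp [smul_sub]) (by simp [smul_add])

theorem mul_smul (s : ℝ) (a b : Octo) : a * (s • b) = s • (a * b) :=
  ext (by simp [smul_sub]) (by simp [smul_add])

theorem re_add (x y : Octo) : re (x + y) = re x + re y := rfl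
theorem re_sub (x y : Octo) : re (x - y) = re x - re y := rfl

theorem re_mul_comm (a b : Octo) : re (a * b) = re (b * a) := by
  simp only [re, fst_mul, Quaternion.re_sub, Quaternion.re_mul, Quaternion.re_star,
    Quaternion.imI_star, Quaternion.imJ_star, Quaternion.imK_star]
  ring

theorem re_mul_assoc (a b c : Octo) : re (a * b * c) = re (a * (b * c)) := by
  simp only [re, fst_mul, snd_mul, star_add, star_mul, star_star, Quaternion.re_sub,
    Quaternion.re_add, Quaternion.re_mul, Quaternion.re_star,
    Quaternion.imI_sub, Quaternion.imI_add, Quaternion.imI_mul, Quaternion.imI_star,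
    Quaternion.imJ_sub, Quaternion.imJ_add, Quaternion.imJ_mul, Quaternion.imJ_star,
    Quaternion.imK_sub, Quaternion.imK_add, Quaternion.imK_mul, Quaternion.imK_star]
  ring

theorem mul_self_mul (a c : Octo) : a * a * c = a * (a * c) := by
  refine ext (QuaternionAlgebra.ext ?_ ?_ ?_ ?_) (QuaternionAlgebra.ext ?_ ?_ ?_ ?_) <;>
  simp only [fst_mul, snd_mul, star_add, star_mul, star_star, Quaternion.re_sub,
    Quaternion.re_add, Quaternion.re_mul, Quaternion.re_star,
    Quaternion.imI_sub, Quaternion.imI_add, Quaternion.imI_mul, Quaternion.imI_star,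
    Quaternion.imJ_sub, Quaternion.imJ_add, Quaternion.imJ_mul, Quaternion.imJ_star,
    Quaternion.imK_sub, Quaternion.imK_add, Quaternion.imK_mul, Quaternion.imK_star] <;>
  ring

theorem assoc_add_assoc_swap (a b c : Octo) : assoc a b c + assoc b a c = 0 :=
  calc assoc a b c + assoc b a c = assoc (a + b) (a + b) c - assoc a a c - assoc b b c := by
        simp only [assoc, add_mul, mul_add]; abel
    _ = 0 := by simp only [assoc, mul_self_mul, sub_self]

theorem re_map_mul_mul_add_swap {f : Octo → Octo} (hf : IsLinearMap ℝ f) (a b c : Octo) :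
    re (f (a * (b * c))) + re (f (b * (a * c))) = re (f (a * b * c)) + re (f (b * a * c)) := by
  have h : a * (b * c) + b * (a * c) - (a * b * c + b * a * c) = -(assoc a b c + assoc b a c) := by
    simp only [assoc]; abel
  rw [← re_add, ← re_add, ← hf.map_add, ← hf.map_add, ← sub_eq_zero, ← re_sub, ← hf.map_sub,
    h, assoc_add_assoc_swap, neg_zero, hf.map_zero]
  rfl

def odot (f : Octo → Octo) (r : Octo) : Octo → Octo := fun x => f x * r - (f (r * x) - r * f x)

local infixl:70 " ⊙ " => odot

theorem isLinearMap_odot {f : Octo → Octo} (hf : IsLinearMap ℝ f) (r : Octo) :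
    IsLinearMap ℝ (f ⊙ r) where
  map_add x y := by simp only [odot, hf.map_add, mul_add, add_mul]; abel
  map_smul s x := by simp only [odot, hf.map_smul, mul_smul, smul_mul, smul_sub]

namespace IsParaLinear

variable {f : Octo → Octo}

theorem re_map_mul (hf : IsParaLinear f) (p x : Octo) : re (f (p * x)) = re (p * f x) := by
  rw [← sub_eq_zero, ← re_sub]; exact hf.2 p x

theorem re_odot_mul (hf : IsParaLinear f) (r p x : Octo) :
    re ((f ⊙ r) (p * x)) = re (f (r * (p * x))) := by
  simp only [odot, re_sub]
  rw [re_mul_comm (f (p * x)) r, hf.re_map_mul]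
  ring

theorem re_mul_odot (hf : IsParaLinear f) (r p x : Octo) :
    re (p * (f ⊙ r) x) = re (f (r * p * x)) - re (f (p * (r * x))) + re (f (p * r * x)) := by
  have h₁ : re (p * (f x * r)) = re (f (r * p * x)) := by
    rw [← re_mul_assoc, re_mul_comm, ← re_mul_assoc, hf.re_map_mul]
  have h₂ : re (p * (r * f x)) = re (f (p * r * x)) := by
    rw [← re_mul_assoc, hf.re_map_mul]
  simp only [odot, mul_sub, re_sub]
  rw [h₁, h₂, hf.re_map_mul p (r * x)]
  ring

end IsParaLinear

end Octo

theorem stmt15 (f : Octo → Octo) (hf : Octo.IsParaLinear f) (r : Octo) :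
    Octo.IsParaLinear (fun x => f x * r - (f (r * x) - r * f x)) := by
  refine ⟨Octo.isLinearMap_odot hf.1 r, fun p x => ?_⟩
  change Octo.re (Octo.odot f r (p * x) - p * Octo.odot f r x) = 0
  rw [Octo.re_sub, hf.re_odot_mul, hf.re_mul_odot]
  linarith [Octo.re_map_mul_mul_add_swap hf.1 r p x]
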